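/- For every real ν ≥ 1/2, lim_{t→0⁺} h_ν(t) = log(2·π^ν/Γ(ν)), i.e., the logarithm of the surface area S_{2ν−1} of the unit (2ν−1)-sphere. -/

import Mathlib

open MeasureTheory Real Filter Set
open scoped ENNReal NNReal Topology

noncomputable section

/-- The modified Bessel function of the first kind `I_ν(t)`. -/
def besselI (ν t : ℝ) : ℝ :=
  ∑' m : ℕ, (t / 2) ^ (2 * (m : ℝ) + ν) / ((m.factorial : ℝ) * Real.Gamma ((m : ℝ) + ν + 1))

/-- The ratio `f_ν(t) = I_ν(t) / I_{ν-1}(t)`. -/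
def besselRatio (ν t : ℝ) : ℝ := besselI ν t / besselI (ν - 1) t

/-- The inverse `f_ν⁻¹ : (0,1) → (0,∞)` of the strictly increasing bijection
`f_ν : (0,∞) → (0,1)`. -/
def besselRatioInv (ν y : ℝ) : ℝ := Function.invFunOn (besselRatio ν) (Set.Ioi 0) y

/-- The function `ξ_ν(t) = -t f_ν(t) + log((2π)^ν I_{ν-1}(t) / t^{ν-1})`. -/
def xiFun (ν t : ℝ) : ℝ :=
  -t * besselRatio ν t + Real.log ((2 * π) ^ ν * besselI (ν - 1) t / t ^ (ν - 1))

/-- The function `h_ν(t) = ξ_ν(f_ν⁻¹(t))`, for `t ∈ (0,1)`. -/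
def hFun (ν t : ℝ) : ℝ := xiFun ν (besselRatioInv ν t)

/-- Surface area of the unit `(n-1)`-sphere in `ℝⁿ`: `S_{n-1} = 2 π^{n/2} / Γ(n/2)`. -/
def surfaceArea (n : ℕ) : ℝ := 2 * π ^ ((n : ℝ) / 2) / Real.Gamma ((n : ℝ) / 2)

/-- `n`-dimensional Euclidean space. -/
abbrev EucSp (n : ℕ) := EuclideanSpace ℝ (Fin n)

/-- The uniform (normalized rotation-invariant) probability distribution on the sphere
`S^{n-1}(R) = {x ∈ ℝⁿ : ‖x‖ = R}`; for `R = 0` it is the point mass at the origin. -/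
def sphereUniform (n : ℕ) (R : ℝ) : Measure (EucSp n) :=
  ((volume : Measure (EucSp n)).toSphere Set.univ)⁻¹ •
    Measure.map (fun x : Metric.sphere (0 : EucSp n) 1 => R • (x : EucSp n))
      (volume : Measure (EucSp n)).toSphere

/-- Kullback-Leibler divergence `KL(μ‖ν)`, with value `∞` unless `μ ≪ ν` and the
log-likelihood ratio is `μ`-integrable. -/
def klDiv {Ω : Type*} [MeasurableSpace Ω] (μ ν : Measure Ω) : ℝ≥0∞ :=
  open scoped Classical in
  if μ ≪ ν ∧ Integrable (llr μ ν) μ then ENNReal.ofReal (∫ x, llr μ ν x ∂μ) else ⊤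

/-- The rate-distortion function `R_n(D;R)` of the uniform distribution on `S^{n-1}(R)`
under squared error distortion: the infimum of the mutual information `I(X̂;X)` over all
joint laws `π` of pairs `(X̂, X)` of `ℝⁿ`-valued random vectors such that `X ∼ μ_R` and
`E[‖X̂ - X‖²] ≤ D`. -/
def rateDistortion (n : ℕ) (D R : ℝ) : ℝ≥0∞ :=
  ⨅ (P : Measure (EucSp n × EucSp n)) (_ : IsProbabilityMeasure P)
    (_ : Measure.map Prod.snd P = sphereUniform n R)
    (_ : ∫⁻ y, ENNReal.ofReal (‖y.1 - y.2‖ ^ (2:ℕ)) ∂P ≤ ENNReal.ofReal D),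
    klDiv P ((Measure.map Prod.fst P).prod (Measure.map Prod.snd P))

/-! Write `I_μ(t) = (t/2)^μ S_μ((t/2)²)` with `S_μ(x) = ∑ xᵐ / (m! Γ(m+μ+1))` entire and
`S_μ(0) = 1/Γ(μ+1) > 0`. Then `f_ν(t) = (t/2) S_ν / S_{ν-1} → 0` and
`ξ_ν(t) → log((2π)^ν 2^{1-ν} / Γ(ν)) = log(2π^ν / Γ(ν))` as `t → 0⁺`. It remains to see that
`f_ν⁻¹(y) → 0⁺`. Comparing terms gives `S_{ν-1}(s²) ≤ (2s+ν) S_ν(s²)`, i.e.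
`t ≤ 2(t+ν) f_ν(t)`, so every preimage of a small `y` is at most `2νy/(1-2y)`; preimages exist
by the intermediate value theorem since `f_ν → 0` at `0`. -/

open scoped Nat

lemma pow_mul_Gamma_le_Gamma_add_natCast {s : ℝ} (hs : 0 < s) (m : ℕ) :
    s ^ m * Gamma s ≤ Gamma (s + m) := by
  induction m with
  | zero => simp
  | succ m ih =>
    have hsm : 0 < s + m := by positivity
    rw [Nat.cast_succ, ← add_assoc, Gamma_add_one hsm.ne', pow_succ', mul_assoc]
    exact mul_le_mul (by linarith [show (0 : ℝ) ≤ m from m.cast_nonneg]) ih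
      (by positivity) hsm.le

def besselSeries (μ x : ℝ) : ℝ := ∑' m : ℕ, x ^ m / (m ! * Gamma (m + μ + 1))

section besselSeries

variable {μ : ℝ}

lemma factorial_mul_Gamma_pos (hμ : -1 < μ) (m : ℕ) : 0 < (m ! : ℝ) * Gamma (m + μ + 1) := by
  have : 0 < (m : ℝ) + μ + 1 := by linarith [show (0 : ℝ) ≤ m from m.cast_nonneg]
  have := Gamma_pos_of_pos this
  positivity

lemma norm_besselSeries_term_le (hμ : -1 < μ) (m : ℕ) {x R : ℝ} (hx : ‖x‖ ≤ R) :
    ‖x ^ m / (m ! * Gamma (m + μ + 1))‖ ≤ (Gamma (μ + 1))⁻¹ * ((R / (μ + 1)) ^ m / m !) := by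
  have hμ1 : 0 < μ + 1 := by linarith
  have hΓ := pow_mul_Gamma_le_Gamma_add_natCast hμ1 m
  rw [show μ + 1 + m = m + μ + 1 by ring] at hΓ
  have := Gamma_pos_of_pos hμ1
  rw [norm_div, norm_pow, Real.norm_of_nonneg (factorial_mul_Gamma_pos hμ m).le, div_pow,
    div_le_iff₀ (factorial_mul_Gamma_pos hμ m)]
  calc ‖x‖ ^ m ≤ R ^ m := by gcongr
    _ = (Gamma (μ + 1))⁻¹ * (R ^ m / (μ + 1) ^ m / m !) *
          (m ! * ((μ + 1) ^ m * Gamma (μ + 1))) := by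
        field_simp
    _ ≤ _ := by
        have hR : 0 ≤ R := (norm_nonneg x).trans hx
        gcongr

lemma summable_besselSeries (hμ : -1 < μ) (x : ℝ) :
    Summable fun m : ℕ ↦ x ^ m / (m ! * Gamma (m + μ + 1)) :=
  Summable.of_norm_bounded ((Real.summable_pow_div_factorial _).mul_left _)
    fun m ↦ norm_besselSeries_term_le hμ m le_rfl

lemma continuous_besselSeries (hμ : -1 < μ) : Continuous (besselSeries μ) := by
  refine continuous_iff_continuousAt.2 fun x ↦ ?_
  have hball : ContinuousOn (besselSeries μ) (Metric.closedBall 0 (‖x‖ + 1)) :=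
    continuousOn_tsum (fun m ↦ by fun_prop)
      ((Real.summable_pow_div_factorial _).mul_left _)
      fun m y hy ↦ norm_besselSeries_term_le hμ m (by simpa using hy)
  exact hball.continuousAt (Metric.closedBall_mem_nhds_of_mem (by simp))

lemma besselSeries_zero : besselSeries μ 0 = (Gamma (μ + 1))⁻¹ := by
  rw [besselSeries, tsum_eq_single 0 fun m hm ↦ by simp [zero_pow hm]]
  simp

lemma besselSeries_pos (hμ : -1 < μ) {x : ℝ} (hx : 0 ≤ x) : 0 < besselSeries μ x := by
  have h0 : 0 < (Gamma (μ + 1))⁻¹ := inv_pos.2 (Gamma_pos_of_pos (by linarith))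
  refine h0.trans_le ?_
  have := (summable_besselSeries hμ x).le_tsum 0
    fun m _ ↦ div_nonneg (pow_nonneg hx m) (factorial_mul_Gamma_pos hμ m).le
  simpa [besselSeries] using this

end besselSeries

lemma besselI_eq_besselSeries (μ : ℝ) {t : ℝ} (ht : 0 < t) :
    besselI μ t = (t / 2) ^ μ * besselSeries μ ((t / 2) ^ 2) := by
  rw [besselI, besselSeries, ← tsum_mul_left]
  refine tsum_congr fun m ↦ ?_
  rw [rpow_add (by positivity), show 2 * (m : ℝ) = ((2 * m : ℕ) : ℝ) by push_cast; ring,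
    rpow_natCast, pow_mul]
  ring

section ratio

variable {ν : ℝ}

/-- The terms `a m` of `besselSeries (ν - 1) x` and `b m` of `besselSeries ν x` satisfy
`a m = (m + ν) b m` and `(m + 1) a (m + 1) = x b m`; which of the two is used depends on
whether `m + 1 ≤ s`. -/
lemma besselSeries_sub_one_term_succ_le (hν : 0 < ν) {s : ℝ} (hs : 0 ≤ s) (m : ℕ) :
    (s ^ 2) ^ (m + 1) / ((m + 1)! * Gamma ((m + 1 : ℕ) + (ν - 1) + 1)) ≤
      (s + ν) * ((s ^ 2) ^ (m + 1) / ((m + 1)! * Gamma ((m + 1 : ℕ) + ν + 1))) +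
        s * ((s ^ 2) ^ m / (m ! * Gamma (m + ν + 1))) := by
  have hm : 0 < (m : ℝ) + 1 := by positivity
  have hmν : 0 < (m : ℝ) + ν + 1 := by positivity
  have hΓ := Gamma_pos_of_pos hmν
  have hfac : (0 : ℝ) < m ! := by positivity
  have hΓ₁ : Gamma ((m + 1 : ℕ) + (ν - 1) + 1) = Gamma (m + ν + 1) := by push_cast; ring_nf
  have hΓ₂ : Gamma ((m + 1 : ℕ) + ν + 1) = (m + ν + 1) * Gamma (m + ν + 1) := by
    rw [← Gamma_add_one hmν.ne']; push_cast; ring_nf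
  have hfac₁ : ((m + 1)! : ℝ) = (m + 1) * m ! := by push_cast [Nat.factorial_succ]; ring
  rw [hΓ₁, hΓ₂, hfac₁]
  have hb : 0 ≤ (s ^ 2) ^ m / (m ! * Gamma (m + ν + 1)) := by positivity
  rcases le_or_gt ((m : ℝ) + 1) s with hms | hms
  · have key : (s ^ 2) ^ (m + 1) / ((m + 1) * m ! * Gamma (m + ν + 1)) =
        (m + ν + 1) *
          ((s ^ 2) ^ (m + 1) / ((m + 1) * m ! * ((m + ν + 1) * Gamma (m + ν + 1)))) := by
      field_simp
    rw [key]
    have : 0 ≤ (s ^ 2) ^ (m + 1) / ((m + 1) * m ! * ((m + ν + 1) * Gamma (m + ν + 1))) := by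
      positivity
    nlinarith
  · have key : (s ^ 2) ^ (m + 1) / ((m + 1) * m ! * Gamma (m + ν + 1)) =
        s ^ 2 / (m + 1) * ((s ^ 2) ^ m / (m ! * Gamma (m + ν + 1))) := by
      field_simp; ring
    have hle : s ^ 2 / (m + 1) ≤ s := by
      rw [div_le_iff₀ hm]; nlinarith
    rw [key]
    have : 0 ≤ (s + ν) * ((s ^ 2) ^ (m + 1) /
        ((m + 1) * m ! * ((m + ν + 1) * Gamma (m + ν + 1)))) := by positivity
    nlinarith

lemma besselSeries_sub_one_le (hν : 0 < ν) {s : ℝ} (hs : 0 ≤ s) :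
    besselSeries (ν - 1) (s ^ 2) ≤ (2 * s + ν) * besselSeries ν (s ^ 2) := by
  have ha := summable_besselSeries (μ := ν - 1) (by linarith) (s ^ 2)
  have hb := summable_besselSeries (μ := ν) (by linarith) (s ^ 2)
  have hb₁ := (summable_nat_add_iff 1).2 hb
  have h₀ : (s ^ 2) ^ 0 / ((0 ! : ℕ) * Gamma ((0 : ℕ) + (ν - 1) + 1)) ≤
      (s + ν) * ((s ^ 2) ^ 0 / ((0 ! : ℕ) * Gamma ((0 : ℕ) + ν + 1))) := by
    have hΓ := Gamma_pos_of_pos hν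
    simp only [pow_zero, Nat.factorial_zero, Nat.cast_one, one_mul, Nat.cast_zero, zero_add,
      sub_add_cancel, Gamma_add_one hν.ne']
    rw [one_div, one_div, mul_inv, ← mul_assoc]
    exact le_mul_of_one_le_left (inv_pos.2 hΓ).le (by rw [le_mul_inv_iff₀ hν]; linarith)
  calc besselSeries (ν - 1) (s ^ 2)
      ≤ (s + ν) * ((s ^ 2) ^ 0 / ((0 ! : ℕ) * Gamma ((0 : ℕ) + ν + 1))) +
          ∑' m : ℕ, ((s + ν) * ((s ^ 2) ^ (m + 1) / ((m + 1)! * Gamma ((m + 1 : ℕ) + ν + 1))) +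
            s * ((s ^ 2) ^ m / (m ! * Gamma (m + ν + 1)))) := by
        rw [besselSeries, ha.tsum_eq_zero_add]
        exact add_le_add h₀ (((summable_nat_add_iff 1).2 ha).tsum_le_tsum
          (besselSeries_sub_one_term_succ_le hν hs) ((hb₁.mul_left _).add (hb.mul_left _)))
    _ = (2 * s + ν) * besselSeries ν (s ^ 2) := by
        rw [(hb₁.mul_left _).tsum_add (hb.mul_left _), tsum_mul_left, tsum_mul_left,
          besselSeries, hb.tsum_eq_zero_add]
        ring

lemma besselRatio_eq (hν : 0 < ν) {t : ℝ} (ht : 0 < t) :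
    besselRatio ν t =
      t / 2 * besselSeries ν ((t / 2) ^ 2) / besselSeries (ν - 1) ((t / 2) ^ 2) := by
  have hS := besselSeries_pos (μ := ν - 1) (by linarith) (sq_nonneg (t / 2))
  have hp := rpow_pos_of_pos (half_pos ht) (ν - 1)
  rw [besselRatio, besselI_eq_besselSeries _ ht, besselI_eq_besselSeries _ ht,
    show ν = ν - 1 + 1 by ring, rpow_add_one (half_pos ht).ne', sub_add_cancel]
  field_simp

lemma continuous_besselRatio_series (hν : 0 < ν) :
    Continuous fun t : ℝ ↦
      t / 2 * besselSeries ν ((t / 2) ^ 2) / besselSeries (ν - 1) ((t / 2) ^ 2) := by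
  have := continuous_besselSeries (μ := ν) (by linarith)
  have := continuous_besselSeries (μ := ν - 1) (by linarith)
  exact Continuous.div (by fun_prop) (by fun_prop)
    fun t ↦ (besselSeries_pos (by linarith) (sq_nonneg _)).ne'

lemma tendsto_besselRatio_zero (hν : 0 < ν) :
    Tendsto (besselRatio ν) (𝓝[>] 0) (𝓝 0) := by
  have h := ((continuous_besselRatio_series hν).tendsto 0).mono_left
    (nhdsWithin_le_nhds (s := Ioi 0))
  simp only [zero_div, zero_mul] at h
  exact h.congr' (eventually_nhdsWithin_of_forall fun t ht ↦ (besselRatio_eq hν ht).symm)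

lemma le_besselRatio (hν : 0 < ν) {t : ℝ} (ht : 0 < t) : t ≤ 2 * (t + ν) * besselRatio ν t := by
  have hS := besselSeries_pos (μ := ν - 1) (by linarith) (sq_nonneg (t / 2))
  have hle := besselSeries_sub_one_le hν (half_pos ht).le
  rw [besselRatio_eq hν ht, mul_div_assoc', le_div_iff₀ hS]
  nlinarith

lemma Ioo_subset_image_besselRatio (hν : 0 < ν) :
    Ioo 0 (besselRatio ν 1) ⊆ besselRatio ν '' Ioi 0 := by
  rintro y ⟨hy₀, hy₁⟩
  obtain ⟨a, ha, ha₀, ha₁⟩ := (((tendsto_besselRatio_zero hν).eventually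
    (eventually_lt_nhds hy₀)).and (Ioo_mem_nhdsGT one_pos)).exists
  have hcont : ContinuousOn (besselRatio ν) (Icc a 1) :=
    (continuous_besselRatio_series hν).continuousOn.congr
      fun t ht ↦ besselRatio_eq hν (ha₀.trans_le ht.1)
  obtain ⟨s, hs, hfs⟩ := intermediate_value_Icc ha₁.le hcont ⟨ha.le, hy₁.le⟩
  exact ⟨s, ha₀.trans_le hs.1, hfs⟩

lemma besselRatioInv_mem_Ioc (hν : 0 < ν) {y : ℝ} (hy : y ∈ Ioo 0 (min (besselRatio ν 1) (1 / 2))) :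
    besselRatioInv ν y ∈ Ioc 0 (2 * ν * y / (1 - 2 * y)) := by
  obtain ⟨hy₀, hy⟩ := hy
  have hex : y ∈ besselRatio ν '' Ioi 0 :=
    Ioo_subset_image_besselRatio hν ⟨hy₀, hy.trans_le (min_le_left _ _)⟩
  have hs : 0 < besselRatioInv ν y := Function.invFunOn_mem hex
  have hle := le_besselRatio hν hs
  rw [besselRatioInv, Function.invFunOn_eq hex, ← besselRatioInv] at hle
  have hy₂ : 0 < 1 - 2 * y := by linarith [min_le_right (besselRatio ν 1) (1 / 2)]
  exact ⟨hs, (le_div_iff₀ hy₂).2 (by linarith)⟩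

lemma tendsto_besselRatioInv (hν : 0 < ν) :
    Tendsto (besselRatioInv ν) (𝓝[>] 0) (𝓝[>] 0) := by
  have hf₁ : 0 < besselRatio ν 1 := by
    have := le_besselRatio hν one_pos
    nlinarith
  have hmem : ∀ᶠ y in 𝓝[>] 0, besselRatioInv ν y ∈ Ioc 0 (2 * ν * y / (1 - 2 * y)) :=
    mem_of_superset (Ioo_mem_nhdsGT (lt_min hf₁ one_half_pos))
      fun y hy ↦ besselRatioInv_mem_Ioc hν hy
  have hbound : Tendsto (fun y : ℝ ↦ 2 * ν * y / (1 - 2 * y)) (𝓝[>] 0) (𝓝 0) := by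
    have : ContinuousAt (fun y : ℝ ↦ 2 * ν * y / (1 - 2 * y)) 0 :=
      ContinuousAt.div (by fun_prop) (by fun_prop) (by norm_num)
    simpa using this.tendsto.mono_left nhdsWithin_le_nhds
  exact tendsto_nhdsWithin_iff.2
    ⟨tendsto_of_tendsto_of_tendsto_of_le_of_le' tendsto_const_nhds hbound
      (hmem.mono fun _ h ↦ h.1.le) (hmem.mono fun _ h ↦ h.2), hmem.mono fun _ h ↦ h.1⟩

end ratio

lemma xiFun_eq {ν t : ℝ} (ht : 0 < t) :
    xiFun ν t = -t * besselRatio ν t +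
      log ((2 * π) ^ ν / 2 ^ (ν - 1) * besselSeries (ν - 1) ((t / 2) ^ 2)) := by
  have := rpow_pos_of_pos ht (ν - 1)
  rw [xiFun, besselI_eq_besselSeries _ ht, div_rpow ht.le zero_le_two]
  field_simp

lemma tendsto_xiFun {ν : ℝ} (hν : 0 < ν) :
    Tendsto (xiFun ν) (𝓝[>] 0) (𝓝 (log (2 * π ^ ν / Gamma ν))) := by
  have hS : Tendsto (fun t : ℝ ↦ besselSeries (ν - 1) ((t / 2) ^ 2)) (𝓝[>] 0) (𝓝 (Gamma ν)⁻¹) := by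
    have := ((continuous_besselSeries (μ := ν - 1) (by linarith)).comp
      (by fun_prop : Continuous fun t : ℝ ↦ (t / 2) ^ 2)).tendsto 0
    simpa [besselSeries_zero, Function.comp_def] using this.mono_left nhdsWithin_le_nhds
  have hlim := ((tendsto_nhdsWithin_of_tendsto_nhds tendsto_id).neg.mul
    (tendsto_besselRatio_zero hν)).add ((hS.const_mul ((2 * π) ^ ν / 2 ^ (ν - 1))).log
      (by have := Gamma_pos_of_pos hν; positivity))
  have hconst : (2 * π) ^ ν / 2 ^ (ν - 1) * (Gamma ν)⁻¹ = 2 * π ^ ν / Gamma ν := by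
    rw [mul_rpow zero_le_two pi_pos.le, rpow_sub_one two_ne_zero]
    have := rpow_pos_of_pos two_pos ν
    field_simp
  rw [neg_zero, zero_mul, zero_add, hconst] at hlim
  exact hlim.congr' (eventually_nhdsWithin_of_forall fun t ht ↦ (xiFun_eq ht).symm)

/-- **Lemma.** For `ν ≥ 1/2`, `lim_{t→0⁺} h_ν(t) = log(2π^ν/Γ(ν)) = log S_{2ν-1}`. -/
theorem hFun_tendsto_at_zero (ν : ℝ) (hν : 1 / 2 ≤ ν) :
    Tendsto (hFun ν) (𝓝[>] (0:ℝ)) (𝓝 (Real.log (2 * π ^ ν / Real.Gamma ν))) :=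
  (tendsto_xiFun (by linarith)).comp (tendsto_besselRatioInv (by linarith))

end
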